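/- Let P be a register protocol with initial value d0 and target qf, and suppose Post*(↑{⟨q0, d0⟩}) = ↑{θ_1, …, θ_n} and Pre*([qf]) = ↑{η_1, …, η_m}. If Post*(↑{⟨q0, d0⟩}) is NOT included in Pre*([qf]) modulo single-state incrementation, then k* = max_{1 ≤ i ≤ n} |st(θ_i)| is a negative cut-off: for every h ≥ k*, there exists a configuration γ ∈ Post*({⟨q0^h, d0⟩}) with γ ∉ Pre*([qf]) (equivalently, qf is reached with probability strictly less than 1 in the system of h processes). -/

import Mathlib

/-- Operation type of a register protocol: read or write. -/
inductive Op : Type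
  | R : Op
  | W : Op
deriving DecidableEq

instance : Fintype Op := ⟨{Op.R, Op.W}, fun x => by cases x <;> simp⟩

/-- A location has at least one outgoing transition. -/
def Nonblock {Q D : Type*} (T : Set (Q × Op × D × Q)) : Prop :=
  ∀ q : Q, ∃ op d q', (q, op, d, q') ∈ T

/-- Whenever a read transition exists from `q`, reads of every datum are enabled in `q`. -/
def ReadTotal {Q D : Type*} (T : Set (Q × Op × D × Q)) : Prop :=
  ∀ q d' q', (q, Op.R, d', q') ∈ T → ∀ d : D, ∃ qd, (q, Op.R, d, qd) ∈ T

/-- One step of the distributed system associated with transition set `T`: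
a configuration is a pair of a finite multiset of locations and a register datum. -/
def IsStep {Q D : Type*} [DecidableEq Q] (T : Set (Q × Op × D × Q)) :
    Multiset Q × D → Multiset Q × D → Prop := fun γ γ' =>
  ∃ q op d'' q', (q, op, d'', q') ∈ T ∧ q ∈ γ.1 ∧
    γ'.1 = γ.1 - {q} + {q'} ∧
    ((op = Op.R ∧ γ.2 = d'' ∧ γ'.2 = d'') ∨ (op = Op.W ∧ γ'.2 = d''))

/-- Reachability: reflexive-transitive closure of the step relation. -/
def Reach {Q D : Type*} [DecidableEq Q] (T : Set (Q × Op × D × Q)) :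
    Multiset Q × D → Multiset Q × D → Prop :=
  Relation.ReflTransGen (IsStep T)

/-- `PostStar T S` is the set of configurations reachable from some configuration of `S`. -/
def PostStar {Q D : Type*} [DecidableEq Q] (T : Set (Q × Op × D × Q))
    (S : Set (Multiset Q × D)) : Set (Multiset Q × D) :=
  {γ' | ∃ γ ∈ S, Reach T γ γ'}

/-- `PreStar T S` is the set of configurations from which some configuration of `S`
is reachable. -/
def PreStar {Q D : Type*} [DecidableEq Q] (T : Set (Q × Op × D × Q))
    (S : Set (Multiset Q × D)) : Set (Multiset Q × D) :=
  {γ | ∃ γ' ∈ S, Reach T γ γ'}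

/-- `[qf]`: configurations containing at least one process in location `qf`. -/
def TargetSet {Q D : Type*} [DecidableEq Q] (qf : Q) : Set (Multiset Q × D) :=
  {γ | 0 < γ.1.count qf}

/-- The order `⪯` on configurations: same register content, same support,
and componentwise smaller multiset. -/
def ConfLE {Q D : Type*} [DecidableEq Q] (γ γ' : Multiset Q × D) : Prop :=
  γ.2 = γ'.2 ∧ γ.1.toFinset = γ'.1.toFinset ∧ γ.1 ≤ γ'.1

/-- Upward closure of a set of configurations with respect to `⪯`. -/
def UpSet {Q D : Type*} [DecidableEq Q] (B : Set (Multiset Q × D)) :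
    Set (Multiset Q × D) :=
  {γ' | ∃ γ ∈ B, ConfLE γ γ'}

/-- `Δ` is included in `Δ'` modulo single-state incrementation. -/
def IncModSSI {Q D : Type*} [DecidableEq Q] (Δ Δ' : Set (Multiset Q × D)) : Prop :=
  ∀ γ ∈ Δ, ∀ q ∈ γ.1.toFinset, ∃ k : ℕ, (γ.1 + Multiset.replicate k q, γ.2) ∈ Δ'

/-!
A witness `γ` of non-inclusion lies above some minimal element `θ i` and has a location `q`
such that no `γ + q^k` lies in `Pre*([qf])`. Pumping `q` in `θ i` up to `h` processes gives a
configuration that is still in the upward-closed `Post*(↑{⟨q0, d0⟩})`, hence, since steps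
preserve the number of processes, reachable from `⟨q0^h, d0⟩`; and it lies below
`γ + q^(h - |θ i|)`, so it is outside the upward-closed `Pre*([qf])`.
-/

theorem Multiset.toFinset_add_replicate_of_mem {α : Type*} [DecidableEq α] {s : Multiset α}
    {a : α} (ha : a ∈ s) (k : ℕ) : (s + Multiset.replicate k a).toFinset = s.toFinset := by
  ext x
  simp only [Multiset.toFinset_add, Finset.mem_union, Multiset.mem_toFinset,
    Multiset.mem_replicate]
  exact ⟨fun hx => hx.elim id fun hx => hx.2 ▸ ha, Or.inl⟩

section Configurations

variable {Q D : Type*} [DecidableEq Q]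

theorem ConfLE.trans {a b c : Multiset Q × D} (hab : ConfLE a b) (hbc : ConfLE b c) :
    ConfLE a c :=
  ⟨hab.1.trans hbc.1, hab.2.1.trans hbc.2.1, hab.2.2.trans hbc.2.2⟩

theorem ConfLE.mem_iff {γ δ : Multiset Q × D} (h : ConfLE γ δ) {q : Q} :
    q ∈ γ.1 ↔ q ∈ δ.1 := by
  rw [← Multiset.mem_toFinset, h.2.1, Multiset.mem_toFinset]

theorem confLE_add_replicate {γ : Multiset Q × D} {q : Q} (hq : q ∈ γ.1) (k : ℕ) :
    ConfLE γ (γ.1 + Multiset.replicate k q, γ.2) :=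
  ⟨rfl, (Multiset.toFinset_add_replicate_of_mem hq k).symm, Multiset.le_add_right _ _⟩

theorem ConfLE.add_replicate {γ δ : Multiset Q × D} (hγδ : ConfLE γ δ) {q : Q} (hq : q ∈ γ.1)
    (k : ℕ) : ConfLE (γ.1 + Multiset.replicate k q, γ.2) (δ.1 + Multiset.replicate k q, δ.2) := by
  have hqδ : q ∈ δ.1 := hγδ.mem_iff.mp hq
  refine ⟨hγδ.1, ?_, Multiset.add_le_add_right hγδ.2.2⟩
  rw [Multiset.toFinset_add_replicate_of_mem hq, Multiset.toFinset_add_replicate_of_mem hqδ]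
  exact hγδ.2.1

theorem ConfLE.eq_replicate_of_singleton {q0 : Q} {d0 : D} {δ : Multiset Q × D}
    (h : ConfLE ({q0}, d0) δ) : δ = (Multiset.replicate (Multiset.card δ.1) q0, d0) := by
  refine Prod.ext ?_ h.1.symm
  rw [Multiset.eq_replicate_card]
  intro b hb
  have hb' : b ∈ ({q0} : Multiset Q).toFinset := h.2.1 ▸ Multiset.mem_toFinset.mpr hb
  simpa using hb'

theorem mem_upSet_of_confLE {B : Set (Multiset Q × D)} {γ δ : Multiset Q × D}
    (hγ : γ ∈ UpSet B) (hγδ : ConfLE γ δ) : δ ∈ UpSet B :=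
  let ⟨β, hβ, hβγ⟩ := hγ
  ⟨β, hβ, hβγ.trans hγδ⟩

theorem IsStep.card_eq {T : Set (Q × Op × D × Q)} {γ γ' : Multiset Q × D}
    (h : IsStep T γ γ') : Multiset.card γ'.1 = Multiset.card γ.1 := by
  obtain ⟨q, -, -, q', -, hq, hγ', -⟩ := h
  have hpos : 0 < Multiset.card γ.1 := Multiset.card_pos_iff_exists_mem.mpr ⟨q, hq⟩
  rw [hγ', Multiset.card_add, Multiset.card_sub (Multiset.singleton_le.mpr hq),
    Multiset.card_singleton, Multiset.card_singleton, Nat.sub_add_cancel hpos]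

theorem Reach.card_eq {T : Set (Q × Op × D × Q)} {γ γ' : Multiset Q × D}
    (h : Reach T γ γ') : Multiset.card γ'.1 = Multiset.card γ.1 := by
  induction h with
  | refl => rfl
  | tail _ hstep ih => rw [hstep.card_eq, ih]

theorem mem_postStar_replicate_of_mem_postStar_upSet {T : Set (Q × Op × D × Q)} {q0 : Q}
    {d0 : D} {γ : Multiset Q × D} (hγ : γ ∈ PostStar T (UpSet {(({q0} : Multiset Q), d0)})) :
    γ ∈ PostStar T {(Multiset.replicate (Multiset.card γ.1) q0, d0)} := by
  obtain ⟨δ, ⟨_, rfl, hδ⟩, hreach⟩ := hγ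
  refine ⟨δ, ?_, hreach⟩
  rw [Set.mem_singleton_iff, hreach.card_eq]
  exact hδ.eq_replicate_of_singleton

end Configurations

theorem stmt_7_general {Q D : Type*} [DecidableEq Q]
    (T : Set (Q × Op × D × Q))
    (q0 qf : Q) (d0 : D) (n m : ℕ)
    (θ : Fin n → Multiset Q × D) (η : Fin m → Multiset Q × D)
    (hpost : PostStar T (UpSet {(({q0} : Multiset Q), d0)}) = UpSet (Set.range θ))
    (hpre : PreStar T (TargetSet qf) = UpSet (Set.range η))
    (hnot : ¬ IncModSSI (PostStar T (UpSet {(({q0} : Multiset Q), d0)}))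
        (PreStar T (TargetSet qf))) :
    ∀ h : ℕ, (Finset.univ.sup fun i : Fin n => Multiset.card (θ i).1) ≤ h →
      ∃ γ ∈ PostStar T {(Multiset.replicate h q0, d0)},
        γ ∉ PreStar T (TargetSet qf) := by
  intro h hh
  simp only [IncModSSI, not_forall, not_exists, Multiset.mem_toFinset] at hnot
  obtain ⟨γ, hγ, q, hq, hnotpre⟩ := hnot
  obtain ⟨_, ⟨i, rfl⟩, hθγ⟩ : γ ∈ UpSet (Set.range θ) := hpost ▸ hγ
  have hqθ : q ∈ (θ i).1 := hθγ.mem_iff.mpr hq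
  have hθh : Multiset.card (θ i).1 ≤ h :=
    (Finset.le_sup (f := fun i => Multiset.card (θ i).1) (Finset.mem_univ i)).trans hh
  set k := h - Multiset.card (θ i).1
  set γ' : Multiset Q × D := ((θ i).1 + Multiset.replicate k q, (θ i).2)
  have hcard : Multiset.card γ'.1 = h := by
    simp only [γ', k, Multiset.card_add, Multiset.card_replicate]
    omega
  have hγ'post : γ' ∈ PostStar T (UpSet {(({q0} : Multiset Q), d0)}) :=
    hpost ▸ ⟨θ i, ⟨i, rfl⟩, confLE_add_replicate hqθ k⟩
  refine ⟨γ', hcard ▸ mem_postStar_replicate_of_mem_postStar_upSet hγ'post, fun hγ'pre => ?_⟩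
  rw [hpre] at hγ'pre hnotpre
  exact hnotpre k (mem_upSet_of_confLE hγ'pre (hθγ.add_replicate hqθ k))

/-- if `Post*(↑{⟨q0,d0⟩}) = ↑{θ_1,…,θ_n}` is not included in
`Pre*([qf]) = ↑{η_1,…,η_m}` modulo single-state incrementation, then
`max_i |st(θ_i)|` is a negative cut-off. -/
theorem stmt_7 {Q D : Type*} [DecidableEq Q]
    (T : Set (Q × Op × D × Q)) (hnb : Nonblock T) (hrt : ReadTotal T)
    (q0 qf : Q) (d0 : D) (n m : ℕ)
    (θ : Fin n → Multiset Q × D) (η : Fin m → Multiset Q × D)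
    (hpost : PostStar T (UpSet {(({q0} : Multiset Q), d0)}) = UpSet (Set.range θ))
    (hpre : PreStar T (TargetSet qf) = UpSet (Set.range η))
    (hnot : ¬ IncModSSI (PostStar T (UpSet {(({q0} : Multiset Q), d0)}))
        (PreStar T (TargetSet qf))) :
    ∀ h : ℕ, (Finset.univ.sup fun i : Fin n => Multiset.card (θ i).1) ≤ h →
      ∃ γ ∈ PostStar T {(Multiset.replicate h q0, d0)},
        γ ∉ PreStar T (TargetSet qf) :=
  stmt_7_general T q0 qf d0 n m θ η hpost hpre hnot
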